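/- arXiv:1108.5245 — 2 statements merged into one kernel-verified Lean document; each statement's English description precedes it below -/
import Mathlib

section
/- Let P be a finite ranked poset with rank function r taking maximum value R, let P_i = {p ∈ P : r(p) = i}, and let t_i denote the composition of the toggles t_p over all p ∈ P_i (well defined, since toggles at elements of equal rank commute). Then for every permutation σ of {0, 1, …, R}, the map Ψ_σ := t_{σ(0)} ∘ t_{σ(1)} ∘ ⋯ ∘ t_{σ(R)} is conjugate to the Fon-Der-Flaass action Ψ = t_0 ∘ t_1 ∘ ⋯ ∘ t_R inside the toggle group G(P). -/
open Classical

namespace FDF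

variable {α : Type*} [PartialOrder α] [DecidableEq α]

/-- `I` is an order ideal (down-set) of the poset `α`. -/
def IsIdeal (I : Finset α) : Prop := ∀ ⦃x y : α⦄, y ∈ I → x ≤ y → x ∈ I

/-- The toggle `t_p`. -/
noncomputable def toggle (p : α) (I : Finset α) : Finset α :=
  if p ∈ I ∧ ∀ y ∈ I, ¬ p < y then I.erase p
  else if p ∉ I ∧ IsIdeal (insert p I) then insert p I
  else I

variable [Fintype α]

/-- The Fon-Der-Flaass action on finsets: the down-closure of the set of minimal
elements of the complement of `I`. -/
noncomputable def fdf (I : Finset α) : Finset α :=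
  Finset.univ.filter (fun x => ∃ y, y ∉ I ∧ (∀ z, z < y → z ∈ I) ∧ x ≤ y)

theorem isIdeal_fdf (I : Finset α) : IsIdeal (fdf I) := by
  intro x y hy hxy
  simp only [fdf, Finset.mem_filter, Finset.mem_univ, true_and] at *
  obtain ⟨y', h1, h2, h3⟩ := hy
  exact ⟨y', h1, h2, le_trans hxy h3⟩

theorem mem_iff_fdf {I : Finset α} (hI : IsIdeal I) (x : α) :
    x ∈ I ↔ ∀ y, (y ∈ fdf I ∧ ∀ z ∈ fdf I, ¬ y < z) → ¬ y ≤ x := by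
  constructor
  · rintro hx y ⟨hyf, hymax⟩ hyx
    -- y is a maximal element of fdf I; show y ∈ U(I), i.e. y ∉ I, contradiction with y ≤ x ∈ I
    simp only [fdf, Finset.mem_filter, Finset.mem_univ, true_and] at hyf
    obtain ⟨y', h1, h2, h3⟩ := hyf
    have hy'f : y' ∈ fdf I := by
      simp only [fdf, Finset.mem_filter, Finset.mem_univ, true_and]
      exact ⟨y', h1, h2, le_refl _⟩
    have : y = y' := by
      rcases lt_or_eq_of_le h3 with h | h
      · exact absurd h (hymax y' hy'f)
      · exact h
    subst this
    exact h1 (hI hx hyx)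
  · intro h
    by_contra hx
    -- find a minimal element of the complement below x
    have hne : (Finset.univ.filter (fun z => z ∉ I ∧ z ≤ x)).Nonempty :=
      ⟨x, by simp [hx]⟩
    obtain ⟨y, hy, hymin⟩ : ∃ y ∈ Finset.univ.filter (fun z => z ∉ I ∧ z ≤ x),
        ∀ z ∈ Finset.univ.filter (fun z => z ∉ I ∧ z ≤ x), ¬ z < y := by
      obtain ⟨y, hy⟩ := Finset.exists_minimal hne
      exact ⟨y, hy.1, fun z hz hzy => lt_irrefl _ (lt_of_lt_of_le hzy (hy.2 hz hzy.le))⟩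
    simp only [Finset.mem_filter, Finset.mem_univ, true_and] at hy
    have hUy : y ∉ I ∧ ∀ z, z < y → z ∈ I := by
      refine ⟨hy.1, fun z hz => ?_⟩
      by_contra hzI
      exact hymin z (by simp [hzI, le_trans hz.le hy.2]) hz
    have hyf : y ∈ fdf I := by
      simp only [fdf, Finset.mem_filter, Finset.mem_univ, true_and]
      exact ⟨y, hUy.1, hUy.2, le_refl _⟩
    refine h y ⟨hyf, ?_⟩ hy.2
    intro t htf hyt
    simp only [fdf, Finset.mem_filter, Finset.mem_univ, true_and] at htf
    obtain ⟨y'', h1, h2, h3⟩ := htf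
    exact hUy.1 (h2 y (lt_of_lt_of_le hyt h3))

/-- The type of order ideals of `α`. -/
abbrev Ideals (α : Type*) [PartialOrder α] := {I : Finset α // IsIdeal I}

noncomputable instance : Fintype (Ideals α) := Fintype.ofFinite _

/-- The Fon-Der-Flaass action as a permutation of the set of order ideals. -/
noncomputable def fdfPerm (α : Type*) [PartialOrder α] [Fintype α] [DecidableEq α] :
    Equiv.Perm (Ideals α) :=
  Equiv.ofBijective (fun I => ⟨fdf I.1, isIdeal_fdf I.1⟩)
    (Finite.injective_iff_bijective.mp (by
      rintro ⟨I, hI⟩ ⟨J, hJ⟩ h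
      have h' : fdf I = fdf J := congrArg Subtype.val h
      refine Subtype.ext (Finset.ext fun x => ?_)
      rw [mem_iff_fdf hI, mem_iff_fdf hJ, h']))

theorem isIdeal_toggle (p : α) {I : Finset α} (hI : IsIdeal I) : IsIdeal (toggle p I) := by
  unfold toggle
  split_ifs with h1 h2
  · intro x y hy hxy
    rw [Finset.mem_erase] at hy ⊢
    refine ⟨fun hxp => ?_, hI hy.2 hxy⟩
    subst hxp
    rcases lt_or_eq_of_le hxy with h | h
    · exact h1.2 y hy.2 h
    · exact hy.1 h.symm
  · exact h2.2
  · exact hI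

theorem toggle_toggle (p : α) {I : Finset α} (hI : IsIdeal I) : toggle p (toggle p I) = I := by
  by_cases h1 : p ∈ I ∧ ∀ y ∈ I, ¬ p < y
  · have e1 : toggle p I = I.erase p := by unfold toggle; rw [if_pos h1]
    rw [e1]
    have h2 : ¬ (p ∈ I.erase p ∧ ∀ y ∈ I.erase p, ¬ p < y) := by
      simp [Finset.mem_erase]
    have h3 : p ∉ I.erase p ∧ IsIdeal (insert p (I.erase p)) := by
      refine ⟨by simp, ?_⟩
      rw [Finset.insert_erase h1.1]
      exact hI
    unfold toggle
    rw [if_neg h2, if_pos h3, Finset.insert_erase h1.1]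
  · by_cases h2 : p ∉ I ∧ IsIdeal (insert p I)
    · have e1 : toggle p I = insert p I := by unfold toggle; rw [if_neg h1, if_pos h2]
      rw [e1]
      have h3 : p ∈ insert p I ∧ ∀ y ∈ insert p I, ¬ p < y := by
        refine ⟨Finset.mem_insert_self _ _, fun y hy hpy => ?_⟩
        rcases Finset.mem_insert.mp hy with h | h
        · subst h; exact lt_irrefl _ hpy
        · exact h2.1 (hI h hpy.le)
      unfold toggle
      rw [if_pos h3, Finset.erase_insert h2.1]
    · have e1 : toggle p I = I := by unfold toggle; rw [if_neg h1, if_neg h2]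
      rw [e1]
      unfold toggle
      rw [if_neg h1, if_neg h2]

/-- The toggle `t_p` as a permutation of the set of order ideals. -/
noncomputable def togglePerm (p : α) : Equiv.Perm (Ideals α) where
  toFun I := ⟨toggle p I.1, isIdeal_toggle p I.2⟩
  invFun I := ⟨toggle p I.1, isIdeal_toggle p I.2⟩
  left_inv I := Subtype.ext (toggle_toggle p I.2)
  right_inv I := Subtype.ext (toggle_toggle p I.2)

/-- The toggle group `G(P)`. -/
noncomputable def toggleGroup (α : Type*) [PartialOrder α] [Fintype α] [DecidableEq α] :
    Subgroup (Equiv.Perm (Ideals α)) :=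
  Subgroup.closure (Set.range (togglePerm (α := α)))

end FDF

/-!
Toggles `t_p` and `t_q` commute unless one of `p`, `q` covers the other, so the rank toggles
`t_i` and `t_j` commute whenever `|i - j| ≥ 2`. For generators with this "path" commutation
pattern, every product of all of them in some order is conjugate, inside the group they
generate, to `t_0 t_1 ⋯ t_R`: after commuting `t_R` past the factors it commutes with, at most
one cyclic rotation (a conjugation) brings it to the end of the word, and induction on `R`
deals with the rest, carrying the already placed tail along as an extra factor that commutes
with `t_0, …, t_{R-2}`.

It remains to see that `t_0 t_1 ⋯ t_R`, which toggles from the top rank down, is `Ψ`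
(Cameron–Fon-Der-Flaass): when toggling at `p`, the elements above `p` already agree with
`Ψ(I)` and those below `p` still agree with `I`, and in that situation toggling puts `p` into
the ideal exactly when `p ∈ Ψ(I)`.
-/

theorem Commute.list_prod_map_left {ι M : Type*} [Monoid M] {f : ι → M} {l : List ι} {x : M}
    (h : ∀ i ∈ l, Commute (f i) x) :
    Commute (l.map f).prod x :=
  Commute.list_prod_left _ _ (List.forall_mem_map.mpr h)

theorem list_prod_map_mem_closure_range {ι G : Type*} [Group G] {f : ι → G} (l : List ι) :
    (l.map f).prod ∈ Subgroup.closure (Set.range f) :=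
  list_prod_mem (List.forall_mem_map.mpr fun i _ => Subgroup.subset_closure ⟨i, rfl⟩)

section CoxeterPath

variable {G : Type*} [Group G] {f : ℕ → G}

theorem exists_conj_prod_map_append_cons_mul (hf : ∀ i j, i + 2 ≤ j → Commute (f i) (f j))
    {n : ℕ} {l₁ l₂ : List ℕ} (hlt : ∀ j ∈ l₁ ++ l₂, j < n) (hnd : (l₁ ++ l₂).Nodup) {x : G}
    (hx : Commute ((l₁ ++ l₂).map f).prod x) :
    ∃ g ∈ Subgroup.closure (Set.range f),
      g * (((l₁ ++ n :: l₂).map f).prod * x) * g⁻¹ = ((l₁ ++ l₂).map f).prod * (f n * x) := by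
  have hcomm : ∀ l : List ℕ, (∀ j ∈ l, j + 2 ≤ n) → Commute (l.map f).prod (f n) :=
    fun l hl => Commute.list_prod_map_left fun j hj => hf j n (hl j hj)
  by_cases h₂ : ∀ j ∈ l₂, j + 2 ≤ n
  · refine ⟨1, one_mem _, ?_⟩
    simp only [List.map_append, List.map_cons, List.prod_append, List.prod_cons, one_mul,
      inv_one, mul_one]
    rw [← (hcomm l₂ h₂).eq]
    group
  · -- `n - 1` lies in `l₂`, hence not in `l₁`, so `f n` commutes with the product over `l₁`
    have h₁ : ∀ j ∈ l₁, j + 2 ≤ n := by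
      obtain ⟨k, hk, hkn⟩ : ∃ k ∈ l₂, n < k + 2 := by simpa using h₂
      intro j hj
      have hjk : j ≠ k := fun h => List.disjoint_of_nodup_append hnd hj (h ▸ hk)
      have := hlt j (List.mem_append_left _ hj)
      have := hlt k (List.mem_append_right _ hk)
      omega
    refine ⟨((l₁ ++ l₂).map f).prod, list_prod_map_mem_closure_range _, ?_⟩
    have hw : ((l₁ ++ n :: l₂).map f).prod = f n * ((l₁ ++ l₂).map f).prod := by
      simp only [List.map_append, List.map_cons, List.prod_append, List.prod_cons]
      rw [← mul_assoc, (hcomm l₁ h₁).eq, mul_assoc]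
    rw [hw, mul_assoc (f n), hx.eq]
    group

theorem exists_conj_prod_map_mul_eq (hf : ∀ i j, i + 2 ≤ j → Commute (f i) (f j)) :
    ∀ {n : ℕ} {l : List ℕ}, l.Perm (List.range n) → ∀ x : G,
      (∀ i, i + 2 ≤ n → Commute (f i) x) →
      ∃ g ∈ Subgroup.closure (Set.range f),
        g * ((l.map f).prod * x) * g⁻¹ = ((List.range n).map f).prod * x
  | 0, l, hl, x, _ => ⟨1, one_mem _, by simp [List.perm_nil.mp hl]⟩
  | n + 1, l, hl, x, hx => by
    obtain ⟨l₁, l₂, rfl⟩ := List.append_of_mem (hl.mem_iff.mpr List.self_mem_range_succ)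
    have hm : (l₁ ++ l₂).Perm (List.range n) := by
      rw [List.range_succ] at hl
      exact (List.perm_middle.symm.trans (hl.trans (List.perm_append_singleton _ _))).cons_inv
    have hlt : ∀ j ∈ l₁ ++ l₂, j < n := fun j hj => List.mem_range.mp (hm.subset hj)
    obtain ⟨g₁, hg₁, hconj₁⟩ := exists_conj_prod_map_append_cons_mul hf hlt
      (hm.nodup_iff.mpr List.nodup_range)
      (Commute.list_prod_map_left fun j hj => hx j (by linarith [hlt j hj]))
    obtain ⟨g₂, hg₂, hconj₂⟩ := exists_conj_prod_map_mul_eq hf hm (f n * x)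
      fun i hi => (hf i n hi).mul_right (hx i (by omega))
    refine ⟨g₂ * g₁, mul_mem hg₂ hg₁, ?_⟩
    calc g₂ * g₁ * (((l₁ ++ n :: l₂).map f).prod * x) * (g₂ * g₁)⁻¹
        = g₂ * (g₁ * (((l₁ ++ n :: l₂).map f).prod * x) * g₁⁻¹) * g₂⁻¹ := by group
      _ = ((List.range n).map f).prod * (f n * x) := by rw [hconj₁, hconj₂]
      _ = ((List.range (n + 1)).map f).prod * x := by simp [List.range_succ, mul_assoc]

theorem exists_conj_prod_map_eq_prod_range (hf : ∀ i j, i + 2 ≤ j → Commute (f i) (f j))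
    {n : ℕ} {l : List ℕ} (hl : l.Perm (List.range n)) :
    ∃ g ∈ Subgroup.closure (Set.range f),
      g * (l.map f).prod * g⁻¹ = ((List.range n).map f).prod := by
  simpa using exists_conj_prod_map_mul_eq hf hl 1 fun _ _ => Commute.one_right _

end CoxeterPath

section RankFunction

variable {α : Type*} [PartialOrder α] {r : α → ℤ}

theorem strictMono_of_covBy_imp_eq_add_one [WellFoundedLT α] [IsStronglyCoatomic α]
    (hr : ∀ x y, y ⋖ x → r x = r y + 1) : StrictMono r := by
  intro x y hxy
  induction y using WellFoundedLT.induction with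
  | _ y ih =>
    obtain ⟨z, hxz, hzy⟩ := exists_le_covBy_of_lt hxy
    rw [hr y z hzy]
    rcases hxz.eq_or_lt with rfl | hxz
    · omega
    · have := ih z hzy.lt hxz
      omega

theorem nonneg_of_isMin_imp_eq_zero [WellFoundedLT α] (hr : Monotone r)
    (hr0 : ∀ p, (∀ q, ¬ q < p) → r p = 0) (x : α) : 0 ≤ r x := by
  obtain ⟨b, hbx, hb⟩ := exists_minimal_le_of_wellFoundedLT (fun _ => True) x trivial
  exact hr0 b (fun q hq => hb.not_lt trivial hq) ▸ hr hbx

end RankFunction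

namespace FDF

section Toggle

variable {α : Type*} [PartialOrder α] [DecidableEq α] {S : Finset α} {p q x : α}

theorem mem_toggle_of_ne (h : x ≠ p) : x ∈ toggle p S ↔ x ∈ S := by
  unfold toggle
  split_ifs <;> simp [h]

theorem isIdeal_insert_iff (hS : IsIdeal S) : IsIdeal (insert p S) ↔ ∀ z < p, z ∈ S := by
  refine ⟨fun h z hz => ?_, fun h x y hy hxy => ?_⟩
  · exact (Finset.mem_insert.mp (h (Finset.mem_insert_self p S) hz.le)).resolve_left hz.ne
  · rcases Finset.mem_insert.mp hy with rfl | hy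
    · rcases hxy.eq_or_lt with rfl | hlt
      · exact Finset.mem_insert_self _ _
      · exact Finset.mem_insert_of_mem (h x hlt)
    · exact Finset.mem_insert_of_mem (hS hy hxy)

theorem mem_toggle_self_iff (hS : IsIdeal S) :
    p ∈ toggle p S ↔ (p ∈ S ∧ ∃ y ∈ S, p < y) ∨ (p ∉ S ∧ ∀ z < p, z ∈ S) := by
  rw [← isIdeal_insert_iff hS]
  unfold toggle
  split_ifs with h₁ h₂
  · simp only [Finset.mem_erase, ne_eq, not_true_eq_false, false_and, false_iff]
    rintro (⟨-, y, hy, hpy⟩ | ⟨hp, -⟩)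
    exacts [h₁.2 y hy hpy, hp h₁.1]
  · exact iff_of_true (Finset.mem_insert_self p S) (Or.inr h₂)
  · by_cases hp : p ∈ S
    · simpa [hp] using h₁
    · simpa [hp] using h₂

theorem exists_lt_mem_toggle_iff (hS : IsIdeal S) (h : ¬ p ⋖ q) :
    (∃ y ∈ toggle q S, p < y) ↔ ∃ y ∈ S, p < y := by
  constructor
  · rintro ⟨y, hy, hpy⟩
    by_cases hyq : y = q
    · subst hyq
      obtain ⟨z, hpz, hzy⟩ := (not_covBy_iff hpy).mp h
      rcases (mem_toggle_self_iff hS).mp hy with ⟨hyS, -⟩ | ⟨-, hbelow⟩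
      · exact ⟨z, hS hyS hzy.le, hpz⟩
      · exact ⟨z, hbelow z hzy, hpz⟩
    · exact ⟨y, (mem_toggle_of_ne hyq).mp hy, hpy⟩
  · rintro ⟨y, hy, hpy⟩
    by_cases hyq : y = q
    · subst hyq
      obtain ⟨z, hpz, hzy⟩ := (not_covBy_iff hpy).mp h
      exact ⟨z, (mem_toggle_of_ne hzy.ne).mpr (hS hy hzy.le), hpz⟩
    · exact ⟨y, (mem_toggle_of_ne hyq).mpr hy, hpy⟩

theorem forall_lt_mem_toggle_iff (hS : IsIdeal S) (h : ¬ q ⋖ p) :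
    (∀ z < p, z ∈ toggle q S) ↔ ∀ z < p, z ∈ S := by
  constructor
  · intro hbelow z hzp
    by_cases hzq : z = q
    · subst hzq
      obtain ⟨w, hzw, hwp⟩ := (not_covBy_iff hzp).mp h
      exact hS ((mem_toggle_of_ne hzw.ne').mp (hbelow w hwp)) hzw.le
    · exact (mem_toggle_of_ne hzq).mp (hbelow z hzp)
  · intro hbelow z hzp
    by_cases hzq : z = q
    · subst hzq
      obtain ⟨w, hzw, hwp⟩ := (not_covBy_iff hzp).mp h
      exact (mem_toggle_self_iff hS).mpr (Or.inl ⟨hbelow z hzp, w, hbelow w hwp, hzw⟩)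
    · exact (mem_toggle_of_ne hzq).mpr (hbelow z hzp)

variable [Fintype α]

theorem toggle_comm (hS : IsIdeal S) (h₁ : ¬ p ⋖ q) (h₂ : ¬ q ⋖ p) :
    toggle p (toggle q S) = toggle q (toggle p S) := by
  by_cases hpq : p = q
  · rw [hpq]
  ext x
  by_cases hxp : x = p
  · subst hxp
    rw [mem_toggle_self_iff (isIdeal_toggle q hS), exists_lt_mem_toggle_iff hS h₁,
      forall_lt_mem_toggle_iff hS h₂, mem_toggle_of_ne hpq, ← mem_toggle_self_iff hS,
      mem_toggle_of_ne hpq]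
  by_cases hxq : x = q
  · subst hxq
    rw [mem_toggle_of_ne (Ne.symm hpq), mem_toggle_self_iff (isIdeal_toggle p hS),
      exists_lt_mem_toggle_iff hS h₂, forall_lt_mem_toggle_iff hS h₁,
      mem_toggle_of_ne (Ne.symm hpq), ← mem_toggle_self_iff hS]
  rw [mem_toggle_of_ne hxp, mem_toggle_of_ne hxq, mem_toggle_of_ne hxq, mem_toggle_of_ne hxp]

@[simp]
theorem togglePerm_apply_val (p : α) (I : Ideals α) : (togglePerm p I).1 = toggle p I.1 := rfl

theorem commute_togglePerm (h₁ : ¬ p ⋖ q) (h₂ : ¬ q ⋖ p) :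
    Commute (togglePerm p) (togglePerm q) :=
  Equiv.ext fun I => Subtype.ext (toggle_comm I.2 h₁ h₂)

end Toggle

section FonDerFlaass

variable {α : Type*} [PartialOrder α] [DecidableEq α] [Fintype α] {I S : Finset α} {p : α}

@[simp]
theorem fdfPerm_apply_val (I : Ideals α) : (fdfPerm α I).1 = fdf I.1 := rfl

theorem mem_fdf : p ∈ fdf I ↔ ∃ y, y ∉ I ∧ (∀ z < y, z ∈ I) ∧ p ≤ y := by
  simp [fdf]

theorem mem_fdf_iff :
    p ∈ fdf I ↔ (p ∈ I ∧ ∃ y ∈ fdf I, p < y) ∨ (p ∉ I ∧ ∀ z < p, z ∈ I) := by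
  have hmem : ∀ {y}, y ∉ I → (∀ z < y, z ∈ I) → y ∈ fdf I := fun hy hmin =>
    mem_fdf.mpr ⟨_, hy, hmin, le_rfl⟩
  by_cases hp : p ∈ I
  · simp only [hp, true_and, not_true_eq_false, false_and, or_false]
    refine ⟨fun h => ?_, fun ⟨y, hy, hpy⟩ => isIdeal_fdf I hy hpy.le⟩
    obtain ⟨y, hyI, hymin, hpy⟩ := mem_fdf.mp h
    exact ⟨y, hmem hyI hymin, hpy.lt_of_ne fun h => hyI (h ▸ hp)⟩
  · simp only [hp, false_and, false_or, not_false_eq_true, true_and]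
    refine ⟨fun h => ?_, hmem hp⟩
    obtain ⟨y, hyI, hymin, hpy⟩ := mem_fdf.mp h
    rcases hpy.eq_or_lt with rfl | hpy
    · exact hymin
    · exact absurd (hymin p hpy) hp

theorem mem_toggle_self_iff_mem_fdf (hS : IsIdeal S)
    (habove : ∀ y, p < y → (y ∈ S ↔ y ∈ fdf I)) (hbelow : ∀ z, z < p → (z ∈ S ↔ z ∈ I))
    (hp : p ∈ S ↔ p ∈ I) :
    p ∈ toggle p S ↔ p ∈ fdf I := by
  have hex : (∃ y ∈ S, p < y) ↔ ∃ y ∈ fdf I, p < y :=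
    exists_congr fun y => ⟨fun ⟨hy, hpy⟩ => ⟨(habove y hpy).1 hy, hpy⟩,
      fun ⟨hy, hpy⟩ => ⟨(habove y hpy).2 hy, hpy⟩⟩
  have hall : (∀ z < p, z ∈ S) ↔ ∀ z < p, z ∈ I := forall₂_congr hbelow
  rw [mem_toggle_self_iff hS, mem_fdf_iff, hp, hex, hall]

variable {r : α → ℤ}

theorem mem_prod_togglePerm_iff (hr : StrictMono r) {k : ℤ} :
    ∀ {l : List α}, l.Nodup → (∀ p ∈ l, r p = k) → ∀ {S : Ideals α},
      (∀ x, k < r x → (x ∈ S.1 ↔ x ∈ fdf I)) → (∀ x, r x ≤ k → (x ∈ S.1 ↔ x ∈ I)) →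
      ∀ x, x ∈ ((l.map togglePerm).prod S).1 ↔ if x ∈ l then x ∈ fdf I else x ∈ S.1
  | [], _, _, _, _, _, _ => by simp
  | p :: l, hnd, hl, S, habove, hbelow, x => by
    set T := (l.map togglePerm).prod S
    have hT := mem_prod_togglePerm_iff hr (List.nodup_cons.mp hnd).2
      (fun q hq => hl q (List.mem_cons_of_mem p hq)) habove hbelow
    have hT_of_ne : ∀ y, r y ≠ k → (y ∈ T.1 ↔ y ∈ S.1) := fun y hy => by
      rw [hT, if_neg fun h => hy (hl y (List.mem_cons_of_mem p h))]
    have hrp : r p = k := hl p List.mem_cons_self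
    rw [List.map_cons, List.prod_cons, Equiv.Perm.mul_apply, togglePerm_apply_val]
    by_cases hxp : x = p
    · subst hxp
      rw [if_pos List.mem_cons_self]
      refine mem_toggle_self_iff_mem_fdf T.2 (fun y hy => ?_) (fun z hz => ?_) ?_
      · have := hr hy
        exact (hT_of_ne y (by omega)).trans (habove y (by omega))
      · have := hr hz
        exact (hT_of_ne z (by omega)).trans (hbelow z (by omega))
      · rw [hT, if_neg (List.nodup_cons.mp hnd).1]
        exact hbelow x hrp.le
    · rw [mem_toggle_of_ne hxp, hT]
      simp [hxp]

end FonDerFlaass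

section RankToggle

variable {α : Type*} [PartialOrder α] [DecidableEq α] [Fintype α] {r : α → ℤ}

noncomputable def rankToggle (L : ℕ → List α) (k : ℕ) : Equiv.Perm (Ideals α) :=
  ((L k).map togglePerm).prod

theorem commute_rankToggle (hr : ∀ x y, y ⋖ x → r x = r y + 1) {L : ℕ → List α}
    (hL : ∀ i, ∀ p ∈ L i, r p = i) {i j : ℕ} (hij : i + 2 ≤ j) :
    Commute (rankToggle L i) (rankToggle L j) :=
  Commute.list_prod_map_left fun p hp => (Commute.list_prod_map_left fun q hq =>
    have := hL i p hp
    have := hL j q hq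
    commute_togglePerm (fun h => by have := hr p q h; omega)
      (fun h => by have := hr q p h; omega)).symm

theorem closure_range_rankToggle_le_toggleGroup (L : ℕ → List α) :
    Subgroup.closure (Set.range (rankToggle L)) ≤ toggleGroup α :=
  (Subgroup.closure_le _).mpr <| Set.range_subset_iff.mpr fun k =>
    list_prod_map_mem_closure_range (L k)

theorem mem_prod_rankToggle_range'_iff (hr : StrictMono r) {L : ℕ → List α}
    (hLnd : ∀ i, (L i).Nodup) (hL : ∀ i p, p ∈ L i ↔ r p = i) (I : Ideals α) :
    ∀ {m c : ℕ}, (∀ x, r x < m + c) → ∀ x,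
      x ∈ (((List.range' m c).map (rankToggle L)).prod I).1 ↔
        if (m : ℤ) ≤ r x then x ∈ fdf I.1 else x ∈ I.1
  | m, 0, hlt, x => by
    rw [if_neg (by simpa using hlt x)]
    rfl
  | m, c + 1, hlt, x => by
    have ih := mem_prod_rankToggle_range'_iff hr hLnd hL I (m := m + 1) (c := c)
      fun y => by have := hlt y; push_cast at this ⊢; omega
    rw [List.range'_succ, List.map_cons, List.prod_cons, Equiv.Perm.mul_apply, rankToggle,
      mem_prod_togglePerm_iff hr (hLnd m) (fun p hp => (hL m p).1 hp)
        (fun y hy => by rw [ih, if_pos (by push_cast; omega)])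
        (fun y hy => by rw [ih, if_neg (by push_cast; omega)]), ih]
    by_cases hx : r x = m
    · simp [(hL m x).2 hx, hx]
    · rw [if_neg fun h => hx ((hL m x).1 h)]
      simp only [Nat.cast_add, Nat.cast_one, show (m : ℤ) + 1 ≤ r x ↔ (m : ℤ) ≤ r x by omega]

theorem prod_rankToggle_range_eq_fdfPerm (hr : StrictMono r) {L : ℕ → List α}
    (hLnd : ∀ i, (L i).Nodup) (hL : ∀ i p, p ∈ L i ↔ r p = i) {n : ℕ}
    (hnonneg : ∀ x, 0 ≤ r x) (hlt : ∀ x, r x < n) :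
    ((List.range n).map (rankToggle L)).prod = fdfPerm α := by
  refine Equiv.ext fun I => Subtype.ext (Finset.ext fun x => ?_)
  rw [List.range_eq_range', mem_prod_rankToggle_range'_iff hr hLnd hL I (by simpa using hlt),
    if_pos (by simpa using hnonneg x), fdfPerm_apply_val]

end RankToggle

end FDF

theorem fdfPerm_isConj_rank_toggles_general
    {P : Type*} [PartialOrder P] [Fintype P] [DecidableEq P]
    (r : P → ℤ)
    (hr0 : ∀ p : P, (∀ q : P, ¬ q < p) → r p = 0)
    (hrcov : ∀ x y : P, y ⋖ x → r x = r y + 1)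
    (R : ℕ) (hRle : ∀ p : P, r p ≤ (R : ℤ))
    (L : ℕ → List P) (hLnd : ∀ i : ℕ, (L i).Nodup)
    (hLmem : ∀ (i : ℕ) (p : P), p ∈ L i ↔ r p = (i : ℤ))
    (σ : Equiv.Perm (Fin (R + 1))) :
    ∃ g ∈ FDF.toggleGroup P,
      g * (List.ofFn (fun i : Fin (R + 1) =>
            ((L (σ i)).map FDF.togglePerm).prod)).prod * g⁻¹ = FDF.fdfPerm P := by
  have hr : StrictMono r := strictMono_of_covBy_imp_eq_add_one hrcov
  have hσ : (List.ofFn fun i => (σ i : ℕ)).Perm (List.range (R + 1)) := by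
    have := σ.ofFn_comp_perm (fun i => (i : ℕ))
    rwa [List.ofFn_eq_map (f := fun i : Fin (R + 1) => (i : ℕ)),
      List.map_coe_finRange_eq_range] at this
  obtain ⟨g, hg, hconj⟩ := exists_conj_prod_map_eq_prod_range
    (fun i j hij => FDF.commute_rankToggle hrcov (fun i p => (hLmem i p).1) hij) hσ
  refine ⟨g, FDF.closure_range_rankToggle_le_toggleGroup L hg, ?_⟩
  rwa [FDF.prod_rankToggle_range_eq_fdfPerm hr hLnd hLmem
    (nonneg_of_isMin_imp_eq_zero hr.monotone hr0)
    (fun x => by have := hRle x; push_cast; omega), List.map_ofFn] at hconj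

/-- For a finite ranked poset `P` with rank function `r` of maximum value `R`, and
`t_i` the composition of the toggles at the rank-`i` elements, the map
`Ψ_σ = t_{σ(0)} ∘ t_{σ(1)} ∘ ⋯ ∘ t_{σ(R)}` is conjugate, inside the toggle group `G(P)`,
to the Fon-Der-Flaass action `Ψ = t_0 ∘ t_1 ∘ ⋯ ∘ t_R`. -/
theorem fdfPerm_isConj_rank_toggles
    {P : Type*} [PartialOrder P] [Fintype P] [DecidableEq P]
    (r : P → ℤ)
    (hr0 : ∀ p : P, (∀ q : P, ¬ q < p) → r p = 0)
    (hrcov : ∀ x y : P, y ⋖ x → r x = r y + 1)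
    (R : ℕ) (hRle : ∀ p : P, r p ≤ (R : ℤ)) (hRmax : ∃ p : P, r p = (R : ℤ))
    (L : ℕ → List P) (hLnd : ∀ i : ℕ, (L i).Nodup)
    (hLmem : ∀ (i : ℕ) (p : P), p ∈ L i ↔ r p = (i : ℤ))
    (σ : Equiv.Perm (Fin (R + 1))) :
    ∃ g ∈ FDF.toggleGroup P,
      g * (List.ofFn (fun i : Fin (R + 1) =>
            ((L (σ i)).map FDF.togglePerm).prod)).prod * g⁻¹ = FDF.fdfPerm P :=
  fdfPerm_isConj_rank_toggles_general r hr0 hrcov R hRle L hLnd hLmem σ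
end

section
/- Let (W, S) be a Coxeter system, let w ∈ W be fully commutative with reduced word s_{i_1} ⋯ s_{i_ℓ} and heap P_w, let φ : J(P_w) → {x ∈ W : x ≤_L w} be the bijection reading an order ideal as a word, let I be an order ideal of P_w with u = φ(I), and fix a generator s_k. Then there exists a maximal element p₀ of I whose label is s_k if and only if ℓ(s_k u) < ℓ(u); and in that case φ(I ∖ {p₀}) = s_k u. -/
namespace Heap

variable {B : Type*} {W : Type*} [Group W] {M : CoxeterMatrix B}

/-- `l₂` is obtained from `l₁` by swapping one adjacent pair of commuting letters. -/
def CommSwap (cs : CoxeterSystem M W) (l₁ l₂ : List B) : Prop :=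
  ∃ (a b : List B) (x y : B), Commute (cs.simple x) (cs.simple y) ∧
    l₁ = a ++ x :: y :: b ∧ l₂ = a ++ y :: x :: b

/-- `l` is a reduced word for `w`. -/
def IsReducedWordFor (cs : CoxeterSystem M W) (w : W) (l : List B) : Prop :=
  cs.wordProd l = w ∧ cs.IsReduced l

/-- `w` is fully commutative: any two reduced words for `w` are related by a sequence of
swaps of adjacent commuting letters. -/
def FullyCommutative (cs : CoxeterSystem M W) (w : W) : Prop :=
  ∀ l₁ l₂ : List B, IsReducedWordFor cs w l₁ → IsReducedWordFor cs w l₂ →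
    Relation.ReflTransGen (CommSwap cs) l₁ l₂

/-- The heap (strict) order on positions of the word `ω`: the transitive closure of the
relations `j' <ₕ j` for all integers `j < j'` such that the letters in positions `j`, `j'`
do not commute. -/
def heapLT (cs : CoxeterSystem M W) (ω : List B) : Fin ω.length → Fin ω.length → Prop :=
  Relation.TransGen (fun a b : Fin ω.length =>
    b.val < a.val ∧ ¬ Commute (cs.simple (ω.get a)) (cs.simple (ω.get b)))

end Heap

namespace Heap

variable {B : Type*} {W : Type*} [Group W] {M : CoxeterMatrix B}

/-- An order ideal of the heap of `ω`. -/
def HeapIdeal (cs : CoxeterSystem M W) (ω : List B) (I : Finset (Fin ω.length)) : Prop :=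
  ∀ ⦃x y : Fin ω.length⦄, y ∈ I → heapLT cs ω x y → x ∈ I

/-- `ρ` is a linear extension of the heap of `ω`: it lists the heap elements in an order
compatible with the heap order. -/
def IsLinearExtension (cs : CoxeterSystem M W) (ω : List B)
    (ρ : Equiv.Perm (Fin ω.length)) : Prop :=
  ∀ a b : Fin ω.length, heapLT cs ω (ρ a) (ρ b) → a < b

/-- The first `|I|` values of `ρ` enumerate `I`. -/
def EnumeratesFirst (ω : List B) (ρ : Equiv.Perm (Fin ω.length))
    (I : Finset (Fin ω.length)) : Prop :=
  ∀ a : Fin ω.length, ρ a ∈ I ↔ a.val < I.card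

/-- The element `φ(I) = s_{i_{ρ(|I|)}} ⋯ s_{i_{ρ(2)}} s_{i_{ρ(1)}}` read from a linear
extension `ρ` whose first `|I|` values enumerate `I`. -/
def phiWord (cs : CoxeterSystem M W) (ω : List B) (ρ : Equiv.Perm (Fin ω.length))
    (I : Finset (Fin ω.length)) : W :=
  cs.wordProd (((List.ofFn (fun a => ω.get (ρ a))).take I.card).reverse)

/-- The left weak Bruhat order: `x ≤_L w` iff `ℓ(x) + ℓ(w x⁻¹) = ℓ(w)`. -/
def LeftWeakLE (cs : CoxeterSystem M W) (x w : W) : Prop :=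
  cs.length x + cs.length (w * x⁻¹) = cs.length w

end Heap

/-!
Listing the elements of an order ideal along a linear extension gives a word for `φ(I)⁻¹`, and
two heap-compatible listings of the same elements differ only by moving incomparable, hence
commuting, letters past each other. So `φ` is well defined, and moving a maximal `p₀` to the end
of the listing gives `φ(I) = s_k φ(I ∖ {p₀})`, with `φ(I ∖ {p₀})` shorter.

Conversely, the reversed listing is a reduced word for `u = φ(I)`, a suffix of a reduced word
of `w`, so `u` is fully commutative. If `s_k` is a left descent of `u`, some reduced word of `u`
starts with `k`, and commutation moves turn it into the reversed listing. Following that `k`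
along the moves, it stays preceded only by letters commuting with `s_k`; the heap element
carrying it is then maximal in `I`.
-/

namespace Heap

open List Relation

variable {B : Type*} {W : Type*} [Group W] {M : CoxeterMatrix B} (cs : CoxeterSystem M W)

local prefix:100 "s " => cs.simple
local prefix:100 "π " => cs.wordProd
local prefix:100 "ℓ " => cs.length

theorem wordProd_append_cons_of_commute {k : B} {pre post : List B}
    (h : ∀ x ∈ pre, Commute (s k) (s x)) : π (pre ++ k :: post) = s k * π (pre ++ post) := by
  have hk : Commute (s k) (π pre) :=
    Commute.list_prod_right _ _ (by simpa [List.forall_mem_map] using h)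
  rw [cs.wordProd_append, cs.wordProd_cons, cs.wordProd_append, ← mul_assoc, ← hk.eq, mul_assoc]

theorem exists_isReducedWordFor_cons {u : W} {k : B} (hk : ℓ (s k * u) < ℓ u) :
    ∃ τ, IsReducedWordFor cs u (k :: τ) := by
  obtain ⟨τ, hτ, hτu⟩ := cs.exists_isReduced (s k * u)
  have hu : π (k :: τ) = u := by rw [cs.wordProd_cons, ← hτu, cs.simple_mul_simple_cancel_left]
  refine ⟨τ, hu, ?_⟩
  rw [CoxeterSystem.IsReduced, hu, List.length_cons, ← hτ.eq, ← hτu]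
  exact ((cs.length_simple_mul u k).resolve_left (by omega)).symm

/-- Follows one occurrence of `k` along commutation moves starting from `k :: b`. -/
def CommutesToFront (k : B) (b N : List B) : Prop :=
  ∃ pre post, N = pre ++ k :: post ∧ (∀ x ∈ pre, Commute (s k) (s x)) ∧
    ReflTransGen (CommSwap cs) b (pre ++ post)

theorem CommutesToFront.of_commSwap {k : B} {b N N' : List B} (h : CommutesToFront cs k b N)
    (hs : CommSwap cs N N') : CommutesToFront cs k b N' := by
  obtain ⟨pre, post, rfl, hpre, hb⟩ := h
  obtain ⟨al, bl, x, y, hxy, heq, rfl⟩ := hs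
  rcases List.append_eq_append_iff.mp heq with ⟨c', rfl, h⟩ | ⟨a', rfl, h⟩
  · rcases c' with _ | ⟨c₁, c'⟩
    · simp only [List.nil_append, List.cons.injEq] at h
      obtain ⟨rfl, rfl⟩ := h
      refine ⟨pre ++ [y], bl, by simp, ?_, by simpa using hb⟩
      simpa [or_imp, forall_and] using ⟨hpre, hxy⟩
    · simp only [List.cons_append, List.cons.injEq] at h
      obtain ⟨rfl, rfl⟩ := h
      exact ⟨pre, c' ++ y :: x :: bl, by simp, hpre,
        hb.tail ⟨pre ++ c', bl, x, y, hxy, by simp, by simp⟩⟩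
  · rcases a' with _ | ⟨a₁, _ | ⟨a₂, a'⟩⟩
    · simp only [List.nil_append, List.cons.injEq] at h
      obtain ⟨rfl, rfl⟩ := h
      refine ⟨al ++ [y], bl, by simp, ?_, by simpa using hb⟩
      simpa [or_imp, forall_and] using ⟨fun z hz => hpre z (by simp [hz]), hxy⟩
    · simp only [List.cons_append, List.nil_append, List.cons.injEq] at h
      obtain ⟨rfl, rfl, rfl⟩ := h
      exact ⟨al, x :: bl, by simp, fun z hz => hpre z (by simp [hz]), by simpa using hb⟩
    · simp only [List.cons_append, List.cons.injEq] at h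
      obtain ⟨rfl, rfl, rfl⟩ := h
      refine ⟨al ++ y :: x :: a', post, by simp, fun z hz => hpre z ?_,
        hb.tail ⟨al, a' ++ post, x, y, hxy, by simp, by simp⟩⟩
      simp only [List.mem_append, List.mem_cons] at hz ⊢
      tauto

theorem commutesToFront_of_reflTransGen {k : B} {b N : List B}
    (h : ReflTransGen (CommSwap cs) (k :: b) N) : CommutesToFront cs k b N := by
  induction h with
  | refl => exact ⟨[], b, rfl, by simp, ReflTransGen.refl⟩
  | tail _ hs ih => exact ih.of_commSwap cs hs

theorem FullyCommutative.of_cons {x : B} {α : List B} (hr : cs.IsReduced (x :: α))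
    (h : FullyCommutative cs (π (x :: α))) : FullyCommutative cs (π α) := by
  have hα : cs.IsReduced α := by simpa using hr.drop 1
  have hcons : ∀ b, IsReducedWordFor cs (π α) b →
      IsReducedWordFor cs (π (x :: α)) (x :: b) := by
    rintro b ⟨hbα, hb⟩
    have hlen : b.length = α.length := by rw [← hb.eq, hbα, hα.eq]
    refine ⟨by rw [cs.wordProd_cons, cs.wordProd_cons, hbα], ?_⟩
    rw [CoxeterSystem.IsReduced, cs.wordProd_cons, hbα, ← cs.wordProd_cons, hr.eq]
    simp [hlen]
  intro b₁ b₂ hb₁ hb₂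
  obtain ⟨pre, post, hsplit, hpre, hpath⟩ :=
    commutesToFront_of_reflTransGen cs (h _ _ (hcons b₁ hb₁) (hcons b₂ hb₂))
  rcases pre with _ | ⟨y, pre⟩
  · simp only [List.nil_append, List.cons.injEq, true_and] at hsplit
    simpa [hsplit] using hpath
  · -- a second `x` commuting to the front would cancel the first one
    simp only [List.cons_append, List.cons.injEq] at hsplit
    obtain ⟨rfl, rfl⟩ := hsplit
    have hred := (hcons _ hb₂).2.eq
    rw [cs.wordProd_cons, wordProd_append_cons_of_commute cs (fun z hz => hpre z (by simp [hz])),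
      cs.simple_mul_simple_cancel_left] at hred
    have := cs.length_wordProd_le (pre ++ post)
    simp only [List.length_cons, List.length_append] at hred this
    omega

theorem FullyCommutative.of_append (pre : List B) {α : List B} (hr : cs.IsReduced (pre ++ α))
    (h : FullyCommutative cs (π (pre ++ α))) : FullyCommutative cs (π α) := by
  induction pre with
  | nil => simpa using h
  | cons x pre ih => exact ih (by simpa using hr.drop 1) (FullyCommutative.of_cons cs hr h)

section HeapOrder

variable {ω : List B}

theorem lt_of_heapLT {x y : Fin ω.length} (h : heapLT cs ω x y) : y < x := by
  induction h with
  | single h => exact h.1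
  | tail _ h ih => exact h.1.trans ih

theorem commute_of_not_heapLT {x y : Fin ω.length} (hxy : ¬ heapLT cs ω x y)
    (hyx : ¬ heapLT cs ω y x) : Commute (s (ω.get x)) (s (ω.get y)) := by
  by_contra hc
  rcases lt_trichotomy x y with h | rfl | h
  · exact hyx (TransGen.single ⟨h, fun h' => hc h'.symm⟩)
  · exact hc (Commute.refl _)
  · exact hxy (TransGen.single ⟨h, hc⟩)

def HeapSorted (l : List (Fin ω.length)) : Prop :=
  l.Pairwise fun a b => ¬ heapLT cs ω b a

theorem wordProd_map_get_eq_of_perm {l₁ l₂ : List (Fin ω.length)} (h₁ : HeapSorted cs l₁)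
    (h₂ : HeapSorted cs l₂) (hp : l₁.Perm l₂) :
    π (l₁.map ω.get) = π (l₂.map ω.get) := by
  induction l₂ generalizing l₁ with
  | nil => rw [hp.eq_nil]
  | cons m l₂ ih =>
    obtain ⟨A, C, rfl⟩ := List.append_of_mem (hp.mem_iff.mpr List.mem_cons_self)
    have hAC : (A ++ C).Perm l₂ := (List.perm_middle.symm.trans hp).cons_inv
    -- everything listed before `m` in `l₁` but after it in `l₂` is incomparable to `m`
    have hA : ∀ a ∈ A, Commute (s (ω.get m)) (s (ω.get a)) := fun a ha =>
      commute_of_not_heapLT cs ((List.pairwise_append.mp h₁).2.2 a ha m List.mem_cons_self)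
        ((List.pairwise_cons.mp h₂).1 a (hAC.subset (List.mem_append_left C ha)))
    have hsub : (A ++ C).Sublist (A ++ m :: C) := (List.sublist_cons_self m C).append_left A
    rw [List.map_append, List.map_cons, wordProd_append_cons_of_commute cs
      (by simpa [List.forall_mem_map] using hA), ← List.map_append,
      ih (h₁.sublist hsub) h₂.of_cons hAC, List.map_cons, cs.wordProd_cons]

end HeapOrder

section LinearExtension

variable {ω : List B} {ρ : Equiv.Perm (Fin ω.length)} {J : Finset (Fin ω.length)}

def extPrefix (ρ : Equiv.Perm (Fin ω.length)) (J : Finset (Fin ω.length)) :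
    List (Fin ω.length) :=
  (List.ofFn ρ).take J.card

theorem length_extPrefix : (extPrefix ρ J).length = J.card := by
  simpa [extPrefix] using J.card_le_univ

theorem nodup_extPrefix : (extPrefix ρ J).Nodup :=
  (List.nodup_ofFn.mpr ρ.injective).sublist (List.take_sublist _ _)

theorem mem_extPrefix (hen : EnumeratesFirst ω ρ J) {x : Fin ω.length} :
    x ∈ extPrefix ρ J ↔ x ∈ J := by
  rw [← ρ.apply_symm_apply x, hen, extPrefix, List.mem_take_iff_getElem]
  simp only [List.getElem_ofFn, EmbeddingLike.apply_eq_iff_eq, List.length_ofFn]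
  constructor
  · rintro ⟨j, hj, hjx⟩
    exact hjx ▸ (lt_min_iff.mp hj).1
  · intro h
    exact ⟨_, lt_min h (ρ.symm x).isLt, rfl⟩

theorem heapSorted_ofFn (hρ : IsLinearExtension cs ω ρ) : HeapSorted cs (List.ofFn ρ) :=
  List.pairwise_ofFn.mpr fun _ _ hij h => (hρ _ _ h).not_gt hij

theorem heapSorted_extPrefix (hρ : IsLinearExtension cs ω ρ) : HeapSorted cs (extPrefix ρ J) :=
  (heapSorted_ofFn cs hρ).sublist (List.take_sublist _ _)

theorem heapIdeal_of_enumeratesFirst (hρ : IsLinearExtension cs ω ρ)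
    (hen : EnumeratesFirst ω ρ J) : HeapIdeal cs ω J := by
  intro x y hy hxy
  rw [← ρ.apply_symm_apply x, hen]
  rw [← ρ.apply_symm_apply x, ← ρ.apply_symm_apply y] at hxy
  rw [← ρ.apply_symm_apply y, hen] at hy
  exact (Fin.lt_def.mp (hρ _ _ hxy)).trans hy

theorem phiWord_eq_inv_wordProd (ρ : Equiv.Perm (Fin ω.length)) (J : Finset (Fin ω.length)) :
    phiWord cs ω ρ J = (π ((extPrefix ρ J).map ω.get))⁻¹ := by
  rw [phiWord, cs.wordProd_reverse, extPrefix, List.map_take, List.map_ofFn]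
  rfl

theorem phiWord_eq_simple_mul (hρ : IsLinearExtension cs ω ρ) (hen : EnumeratesFirst ω ρ J)
    {p : Fin ω.length} (hp : p ∈ J) (hmax : ∀ y ∈ J, ¬ heapLT cs ω p y)
    {l : List (Fin ω.length)} (hl : HeapSorted cs l) (hperm : l.Perm ((extPrefix ρ J).erase p)) :
    phiWord cs ω ρ J = s (ω.get p) * (π (l.map ω.get))⁻¹ := by
  have hsorted : HeapSorted cs (l ++ [p]) := List.pairwise_append.mpr
    ⟨hl, List.pairwise_singleton _ _, fun a ha b hb => List.mem_singleton.mp hb ▸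
      hmax a ((mem_extPrefix hen).mp (List.mem_of_mem_erase (hperm.subset ha)))⟩
  have hperm' : (l ++ [p]).Perm (extPrefix ρ J) :=
    (List.perm_append_singleton p l).trans
      ((hperm.cons p).trans (List.perm_cons_erase ((mem_extPrefix hen).mpr hp)).symm)
  rw [phiWord_eq_inv_wordProd, ← wordProd_map_get_eq_of_perm cs hsorted
    (heapSorted_extPrefix cs hρ) hperm', List.map_append, cs.wordProd_append,
    List.map_singleton, cs.wordProd_singleton, mul_inv_rev, cs.inv_simple]

theorem perm_extPrefix_erase {σ : Equiv.Perm (Fin ω.length)} (hen : EnumeratesFirst ω ρ J)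
    {p : Fin ω.length} (hσen : EnumeratesFirst ω σ (J.erase p)) :
    (extPrefix σ (J.erase p)).Perm ((extPrefix ρ J).erase p) := by
  refine (List.perm_ext_iff_of_nodup nodup_extPrefix (nodup_extPrefix.erase p)).mpr fun x => ?_
  rw [mem_extPrefix hσen, nodup_extPrefix.mem_erase_iff, mem_extPrefix hen, Finset.mem_erase]

theorem not_heapLT_of_reverse_extPrefix_eq (hρ : IsLinearExtension cs ω ρ)
    (hen : EnumeratesFirst ω ρ J) {P P' : List (Fin ω.length)} {p₀ : Fin ω.length}
    (hP : (extPrefix ρ J).reverse = P ++ p₀ :: P')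
    (hcomm : ∀ x ∈ P, Commute (s (ω.get p₀)) (s (ω.get x))) :
    ∀ y ∈ J, ¬ heapLT cs ω p₀ y := by
  have hmem : ∀ x, x ∈ J ↔ x ∈ P ++ p₀ :: P' := fun x => by
    rw [← hP, List.mem_reverse, mem_extPrefix hen]
  have hsorted : (P ++ p₀ :: P').Pairwise fun a b => ¬ heapLT cs ω a b :=
    hP ▸ List.pairwise_reverse.mpr (heapSorted_extPrefix cs hρ)
  intro y hy hlt
  -- it suffices to refute the first step `p₀ → z` of the chain, whose labels do not commute
  obtain ⟨z, hpz, hzy⟩ := TransGen.head'_iff.mp hlt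
  have hz : z ∈ J := by
    rcases reflTransGen_iff_eq_or_transGen.mp hzy with rfl | hzy
    · exact hy
    · exact heapIdeal_of_enumeratesFirst cs hρ hen hy hzy
  rcases List.mem_append.mp ((hmem z).mp hz) with hzP | hzP
  · exact hpz.2 (hcomm z hzP)
  · rcases List.mem_cons.mp hzP with rfl | hzP
    · exact hpz.2 (Commute.refl _)
    · exact (List.pairwise_cons.mp (List.pairwise_append.mp hsorted).2.1).1 z hzP
        (TransGen.single hpz)

theorem wordProd_map_get_ofFn (hρ : IsLinearExtension cs ω ρ) :
    π ((List.ofFn ρ).map ω.get) = (π ω)⁻¹ := by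
  have hsorted : HeapSorted cs (List.finRange ω.length).reverse :=
    List.pairwise_reverse.mpr ((List.pairwise_lt_finRange _).imp fun hab h =>
      (lt_of_heapLT cs h).not_gt hab)
  have hperm : (List.ofFn ρ).Perm (List.finRange ω.length).reverse :=
    (List.perm_ext_iff_of_nodup (List.nodup_ofFn.mpr ρ.injective)
      (List.nodup_reverse.mpr (List.nodup_finRange _))).mpr fun x => by simpa using ρ.surjective x
  rw [wordProd_map_get_eq_of_perm cs (heapSorted_ofFn cs hρ) hsorted hperm, List.map_reverse,
    List.map_get_finRange, cs.wordProd_reverse]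

end LinearExtension

section ReducedWord

variable {ω : List B} {ρ : Equiv.Perm (Fin ω.length)}

theorem isReduced_reverse_map_get_ofFn (hred : cs.IsReduced ω) (hρ : IsLinearExtension cs ω ρ) :
    cs.IsReduced ((List.ofFn ρ).map ω.get).reverse := by
  rw [CoxeterSystem.IsReduced, cs.wordProd_reverse, wordProd_map_get_ofFn cs hρ, inv_inv, hred.eq]
  simp

theorem reverse_map_get_ofFn_eq_append (ρ : Equiv.Perm (Fin ω.length))
    (J : Finset (Fin ω.length)) :
    ((List.ofFn ρ).map ω.get).reverse =
      (((List.ofFn ρ).drop J.card).map ω.get).reverse ++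
        ((extPrefix ρ J).map ω.get).reverse := by
  rw [← List.reverse_append, ← List.map_append, extPrefix, List.take_append_drop]

theorem isReducedWordFor_phiWord (hred : cs.IsReduced ω) (hρ : IsLinearExtension cs ω ρ)
    (J : Finset (Fin ω.length)) :
    IsReducedWordFor cs (phiWord cs ω ρ J) ((extPrefix ρ J).map ω.get).reverse := by
  refine ⟨by rw [phiWord_eq_inv_wordProd, cs.wordProd_reverse], ?_⟩
  have := (isReduced_reverse_map_get_ofFn cs hred hρ).drop
    ((((List.ofFn ρ).drop J.card).map ω.get).reverse.length)
  rwa [reverse_map_get_ofFn_eq_append ρ J, List.drop_left] at this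

theorem length_phiWord (hred : cs.IsReduced ω) (hρ : IsLinearExtension cs ω ρ)
    (J : Finset (Fin ω.length)) : ℓ (phiWord cs ω ρ J) = J.card := by
  obtain ⟨hπ, hred'⟩ := isReducedWordFor_phiWord cs hred hρ J
  rw [← hπ, hred'.eq, List.length_reverse, List.length_map, length_extPrefix]

theorem fullyCommutative_phiWord (hred : cs.IsReduced ω)
    (hfc : FullyCommutative cs (π ω)) (hρ : IsLinearExtension cs ω ρ)
    (J : Finset (Fin ω.length)) :
    FullyCommutative cs (phiWord cs ω ρ J) := by
  have hsplit := reverse_map_get_ofFn_eq_append ρ J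
  have := FullyCommutative.of_append cs _ (hsplit ▸ isReduced_reverse_map_get_ofFn cs hred hρ)
    (by rwa [← hsplit, cs.wordProd_reverse, wordProd_map_get_ofFn cs hρ, inv_inv])
  rwa [cs.wordProd_reverse, ← phiWord_eq_inv_wordProd] at this

theorem exists_maximal_of_length_simple_mul_lt (hred : cs.IsReduced ω)
    (hfc : FullyCommutative cs (π ω)) (hρ : IsLinearExtension cs ω ρ)
    {J : Finset (Fin ω.length)} (hen : EnumeratesFirst ω ρ J) {k : B}
    (hk : ℓ (s k * phiWord cs ω ρ J) < ℓ (phiWord cs ω ρ J)) :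
    ∃ p₀ ∈ J, ω.get p₀ = k ∧ ∀ y ∈ J, ¬ heapLT cs ω p₀ y := by
  obtain ⟨τ, hkτ⟩ := exists_isReducedWordFor_cons cs hk
  obtain ⟨pre, post, hsplit, hpre, -⟩ := commutesToFront_of_reflTransGen cs
    (fullyCommutative_phiWord cs hred hfc hρ J _ _ hkτ (isReducedWordFor_phiWord cs hred hρ J))
  rw [← List.map_reverse, List.map_eq_append_iff] at hsplit
  obtain ⟨P, P', hP, rfl, hP'⟩ := hsplit
  obtain ⟨p₀, P', rfl, rfl, rfl⟩ := List.map_eq_cons_iff.mp hP'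
  refine ⟨p₀, (mem_extPrefix hen).mp (List.mem_reverse.mp (by simp [hP])), rfl,
    not_heapLT_of_reverse_extPrefix_eq cs hρ hen hP ?_⟩
  simpa [List.forall_mem_map] using hpre

end ReducedWord

end Heap

open Heap in
theorem phiWord_erase_of_maximal_label_general
    {B : Type*} {W : Type*} [Group W] {M : CoxeterMatrix B}
    (cs : CoxeterSystem M W) (ω : List B)
    (hred : cs.IsReduced ω) (hfc : FullyCommutative cs (cs.wordProd ω))
    (k : B) (I : Finset (Fin ω.length))
    (ρ : Equiv.Perm (Fin ω.length)) (hρ : IsLinearExtension cs ω ρ)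
    (hen : EnumeratesFirst ω ρ I) :
    ((∃ p₀ ∈ I, ω.get p₀ = k ∧ ∀ y ∈ I, ¬ heapLT cs ω p₀ y) ↔
        cs.length (cs.simple k * phiWord cs ω ρ I) < cs.length (phiWord cs ω ρ I)) ∧
    (∀ p₀ ∈ I, ω.get p₀ = k → (∀ y ∈ I, ¬ heapLT cs ω p₀ y) →
      ∀ σ : Equiv.Perm (Fin ω.length), IsLinearExtension cs ω σ →
        EnumeratesFirst ω σ (I.erase p₀) →
        phiWord cs ω σ (I.erase p₀) = cs.simple k * phiWord cs ω ρ I) := by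
  refine ⟨⟨?_, exists_maximal_of_length_simple_mul_lt cs hred hfc hρ hen⟩, ?_⟩
  · rintro ⟨p₀, hp₀, rfl, hmax⟩
    have hpos : 0 < I.card := Finset.card_pos.mpr ⟨p₀, hp₀⟩
    rw [length_phiWord cs hred hρ, phiWord_eq_simple_mul cs hρ hen hp₀ hmax
        ((heapSorted_extPrefix cs hρ).sublist (List.erase_sublist ..)) (List.Perm.refl _),
      cs.simple_mul_simple_cancel_left, cs.length_inv]
    calc cs.length (cs.wordProd (((extPrefix ρ I).erase p₀).map ω.get))
        ≤ ((extPrefix ρ I).erase p₀).length := by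
          simpa using cs.length_wordProd_le (((extPrefix ρ I).erase p₀).map ω.get)
      _ < I.card := by
        rw [List.length_erase_of_mem ((mem_extPrefix hen).mpr hp₀), length_extPrefix]
        omega
  · rintro p₀ hp₀ rfl hmax σ hσ hσen
    rw [phiWord_eq_simple_mul cs hρ hen hp₀ hmax (heapSorted_extPrefix cs hσ)
      (perm_extPrefix_erase hen hσen), cs.simple_mul_simple_cancel_left, phiWord_eq_inv_wordProd]

open Heap in
/-- For an order ideal `I` of the heap of a fully commutative element `w` with
`u = φ(I)`, there is a maximal element `p₀` of `I` labeled `s_k` iff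
`ℓ(s_k u) < ℓ(u)`; in that case `φ(I ∖ {p₀}) = s_k u`. -/
theorem phiWord_erase_of_maximal_label
    {B : Type*} {W : Type*} [Group W] {M : CoxeterMatrix B}
    (cs : CoxeterSystem M W) (ω : List B)
    (hred : cs.IsReduced ω) (hfc : FullyCommutative cs (cs.wordProd ω))
    (k : B) (I : Finset (Fin ω.length)) (hI : HeapIdeal cs ω I)
    (ρ : Equiv.Perm (Fin ω.length)) (hρ : IsLinearExtension cs ω ρ)
    (hen : EnumeratesFirst ω ρ I) :
    ((∃ p₀ ∈ I, ω.get p₀ = k ∧ ∀ y ∈ I, ¬ heapLT cs ω p₀ y) ↔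
        cs.length (cs.simple k * phiWord cs ω ρ I) < cs.length (phiWord cs ω ρ I)) ∧
    (∀ p₀ ∈ I, ω.get p₀ = k → (∀ y ∈ I, ¬ heapLT cs ω p₀ y) →
      ∀ σ : Equiv.Perm (Fin ω.length), IsLinearExtension cs ω σ →
        EnumeratesFirst ω σ (I.erase p₀) →
        phiWord cs ω σ (I.erase p₀) = cs.simple k * phiWord cs ω ρ I) :=
  phiWord_erase_of_maximal_label_general cs ω hred hfc k I ρ hρ hen
end
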